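/- L²-in-time approximation of the temporal Ritz projection (established in the proof of Lemma 3.3, estimate (3.29)): let X be a complex Hilbert space, k ≥ 1 an integer, I = [a, a+τ] with τ > 0, and 0 ≤ m ≤ k. There exists a constant C depending only on k and m (independent of τ, u and X) such that for every u ∈ C^{m+1}(I;X), (∫_I ‖u(t) − (Ru)(t)‖² dt)^{1/2} ≤ C·τ^{m+3/2}·‖u‖_{W^{m+1,∞}(I;X)}. -/

import Mathlib

/-!
Write `g = u' - p'`. The Ritz condition makes `g` L²-orthogonal to the polynomials of degree
`≤ k - 1`, so `‖g‖_{L²}` is at most the L²-distance from `u'` to any of them. Since `m ≤ k`, the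
Taylor polynomial of `u'` of degree `m - 1` is one of them, which gives
`‖g‖_{L²} ≤ τ^{1/2} τ^m M` with `M` the `W^{m+1,∞}` norm of `u`. As `(u - p)(a) = 0`,
Cauchy–Schwarz applied to `(u - p)(t) = ∫_a^t g` gives `‖u - p‖_∞ ≤ τ^{1/2} ‖g‖_{L²} ≤ τ^{m+1} M`,
and passing back to L² costs one more factor `τ^{1/2}`; so `C = 1` works.
-/

open MeasureTheory

universe u

/-- `f : ℝ → X` is an `X`-valued polynomial of degree at most `m`. -/
def IsPolyDeg (X : Type*) [AddCommGroup X] [Module ℝ X] (m : ℕ) (f : ℝ → X) : Prop :=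
  ∃ φ : Fin (m + 1) → X, ∀ t : ℝ, f t = ∑ i : Fin (m + 1), t ^ (i : ℕ) • φ i

/-- `p` is the temporal Ritz projection of `u` on `[a,b]`: the `X`-valued polynomial of
degree ≤ k with `p a = u a` whose derivative is the L²(a,b)-projection of `u'` onto
polynomials of degree ≤ k-1. -/
def IsRitzOn (X : Type*) [NormedAddCommGroup X] [InnerProductSpace ℂ X]
    (a b : ℝ) (k : ℕ) (u p : ℝ → X) : Prop :=
  IsPolyDeg X k p ∧ p a = u a ∧
    ∀ χ : ℝ → X, IsPolyDeg X (k - 1) χ →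
      (∫ t in a..b, (inner ℂ (deriv u t - deriv p t) (χ t) : ℂ)) = 0

open Set intervalIntegral

section Module

variable (X : Type*) [AddCommGroup X] [Module ℝ X]

def polyDegSubmodule (n : ℕ) : Submodule ℝ (ℝ → X) where
  carrier := {f | IsPolyDeg X n f}
  zero_mem' := ⟨0, by simp⟩
  add_mem' := by
    rintro f g ⟨φ, hφ⟩ ⟨ψ, hψ⟩
    exact ⟨φ + ψ, fun t => by simp [hφ, hψ, Finset.sum_add_distrib]⟩
  smul_mem' := by
    rintro c f ⟨φ, hφ⟩
    exact ⟨c • φ, fun t => by simp [hφ, Finset.smul_sum, smul_comm c]⟩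

variable {X}

theorem mem_polyDegSubmodule {n : ℕ} {f : ℝ → X} :
    f ∈ polyDegSubmodule X n ↔ IsPolyDeg X n f :=
  Iff.rfl

theorem IsPolyDeg.succ {n : ℕ} {f : ℝ → X} (hf : IsPolyDeg X n f) : IsPolyDeg X (n + 1) f := by
  obtain ⟨φ, hφ⟩ := hf
  exact ⟨Fin.snoc φ 0, fun t => by simp [Fin.sum_univ_castSucc, hφ]⟩

theorem IsPolyDeg.mono {n n' : ℕ} {f : ℝ → X} (hf : IsPolyDeg X n f) (h : n ≤ n') :
    IsPolyDeg X n' f :=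
  Nat.le_induction hf (fun _ _ => IsPolyDeg.succ) n' h

theorem isPolyDeg_sub_pow_smul (a : ℝ) (c : X) (n : ℕ) :
    IsPolyDeg X n (fun t => (t - a) ^ n • c) := by
  refine ⟨fun i => ((-a) ^ (n - i) * n.choose i) • c, fun t => ?_⟩
  beta_reduce
  rw [sub_eq_add_neg, add_pow, Finset.sum_smul, ← Fin.sum_univ_eq_sum_range]
  simp only [mul_assoc, mul_smul]

end Module

section Normed

variable {E : Type*} [NormedAddCommGroup E] [NormedSpace ℝ E]

theorem isPolyDeg_taylorWithinEval (f : ℝ → E) (n : ℕ) (s : Set ℝ) (x₀ : ℝ) :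
    IsPolyDeg E n (taylorWithinEval f n s x₀) := by
  have : taylorWithinEval f n s x₀ = ∑ i ∈ Finset.range (n + 1),
      fun x => (x - x₀) ^ i • ((i.factorial : ℝ)⁻¹ • iteratedDerivWithin i f s x₀) := by
    ext x
    simp [taylor_within_apply, mul_smul, mul_comm]
  rw [← mem_polyDegSubmodule, this]
  exact Submodule.sum_mem _ fun i hi =>
    (isPolyDeg_sub_pow_smul x₀ _ i).mono (Nat.lt_succ_iff.mp (Finset.mem_range.mp hi))

theorem IsPolyDeg.contDiff {n : ℕ} {f : ℝ → E} (hf : IsPolyDeg E n f) {N : WithTop ℕ∞} :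
    ContDiff ℝ N f := by
  obtain ⟨φ, hφ⟩ := hf
  rw [funext hφ]
  fun_prop

theorem IsPolyDeg.deriv {n : ℕ} {f : ℝ → E} (hf : IsPolyDeg E n f) :
    IsPolyDeg E (n - 1) (deriv f) := by
  obtain ⟨φ, hφ⟩ := hf
  rw [funext hφ]
  cases n with
  | zero => exact ⟨0, fun t => by simp⟩
  | succ n =>
    refine ⟨fun j => ((j : ℝ) + 1) • φ j.succ, fun t => ?_⟩
    rw [(HasDerivAt.fun_sum fun (i : Fin (n + 2)) _ =>
      (hasDerivAt_pow (i : ℕ) t).smul_const (φ i)).deriv, Fin.sum_univ_succ]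
    simp [smul_smul, mul_comm]

end Normed

section InnerProduct

variable {𝕜 E : Type*} [RCLike 𝕜] [NormedAddCommGroup E] [InnerProductSpace 𝕜 E]

theorem integral_norm_sq_le_of_integral_inner_sub_eq_zero {g r : ℝ → E} {a b : ℝ} (hab : a ≤ b)
    (hg : Continuous g) (hr : Continuous r)
    (horth : ∫ t in a..b, inner 𝕜 (g t) (g t - r t) = 0) :
    ∫ t in a..b, ‖g t‖ ^ 2 ≤ ∫ t in a..b, ‖r t‖ ^ 2 := by
  have hpointwise : ∀ t, ‖g t‖ ^ 2
      ≤ RCLike.re (inner 𝕜 (g t) (g t - r t)) + (‖g t‖ ^ 2 + ‖r t‖ ^ 2) / 2 := fun t => by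
    have hcs := re_inner_le_norm (𝕜 := 𝕜) (g t) (r t)
    rw [inner_sub_right, map_sub, inner_self_eq_norm_sq]
    nlinarith [sq_nonneg (‖g t‖ - ‖r t‖)]
  have hinner : Continuous fun t => inner 𝕜 (g t) (g t - r t) := hg.inner (hg.sub hr)
  have hI : IntervalIntegrable (fun t => RCLike.re (inner 𝕜 (g t) (g t - r t))) volume a b :=
    (RCLike.continuous_re.comp hinner).intervalIntegrable a b
  have hG : IntervalIntegrable (fun t => ‖g t‖ ^ 2) volume a b :=
    (hg.norm.pow 2).intervalIntegrable a b
  have hR : IntervalIntegrable (fun t => ‖r t‖ ^ 2) volume a b :=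
    (hr.norm.pow 2).intervalIntegrable a b
  have hre : ∫ t in a..b, RCLike.re (inner 𝕜 (g t) (g t - r t)) = 0 := by
    rw [intervalIntegral_re (μ := volume) (hinner.intervalIntegrable a b), horth, map_zero]
  have hmono := integral_mono_on hab hG (hI.add ((hG.add hR).div_const 2)) fun t _ =>
    hpointwise t
  rw [integral_add hI ((hG.add hR).div_const 2), hre, intervalIntegral.integral_div,
    integral_add hG hR] at hmono
  linarith

end InnerProduct

theorem sq_integral_le_mul_integral_sq {f : ℝ → ℝ} {a b : ℝ} (hab : a ≤ b) (hf : Continuous f) :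
    (∫ t in a..b, f t) ^ 2 ≤ (b - a) * ∫ t in a..b, f t ^ 2 := by
  set A := ∫ t in a..b, f t
  have hsq : 0 ≤ ∫ t in a..b, ((b - a) * f t - A) ^ 2 :=
    integral_nonneg hab fun t _ => sq_nonneg _
  have hexpand : ∫ t in a..b, ((b - a) * f t - A) ^ 2
      = (b - a) * ((b - a) * (∫ t in a..b, f t ^ 2) - A ^ 2) := by
    have h : ∀ t, ((b - a) * f t - A) ^ 2
        = (b - a) ^ 2 * f t ^ 2 - (2 * (b - a) * A) * f t + A ^ 2 := fun t => by ring
    simp_rw [h]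
    rw [integral_add ((by fun_prop : Continuous fun t =>
        (b - a) ^ 2 * f t ^ 2 - 2 * (b - a) * A * f t).intervalIntegrable a b)
      intervalIntegrable_const,
      integral_sub
        ((by fun_prop : Continuous fun t => (b - a) ^ 2 * f t ^ 2).intervalIntegrable a b)
        ((by fun_prop : Continuous fun t => 2 * (b - a) * A * f t).intervalIntegrable a b),
      intervalIntegral.integral_const_mul, intervalIntegral.integral_const_mul,
      intervalIntegral.integral_const, smul_eq_mul]
    ring
  rcases hab.eq_or_lt with rfl | hlt
  · simp [A]
  · exact sub_nonneg.mp ((mul_nonneg_iff_of_pos_left (sub_pos.mpr hlt)).mp (hexpand ▸ hsq))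

theorem integral_norm_sq_le_of_norm_le {E : Type*} [NormedAddCommGroup E] {f : ℝ → E}
    {a b B : ℝ} (hab : a ≤ b) (hB : ∀ t ∈ Icc a b, ‖f t‖ ≤ B) :
    ∫ t in a..b, ‖f t‖ ^ 2 ≤ (b - a) * B ^ 2 := by
  have hB2 : ∀ t ∈ uIoc a b, ‖‖f t‖ ^ 2‖ ≤ B ^ 2 := fun t ht => by
    rw [norm_pow, norm_norm]
    exact pow_le_pow_left₀ (norm_nonneg _) (hB t (Ioc_subset_Icc_self (uIoc_of_le hab ▸ ht))) 2
  have h := norm_integral_le_of_norm_le_const hB2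
  rw [abs_of_nonneg (sub_nonneg.mpr hab), mul_comm] at h
  exact (le_abs_self _).trans ((Real.norm_eq_abs _).symm.trans_le h)

theorem norm_sub_le_sqrt_mul_integral_norm_sq {E : Type*} [NormedAddCommGroup E]
    [NormedSpace ℝ E] [CompleteSpace E] {f f' : ℝ → E} {a b t : ℝ}
    (hf : ∀ x, HasDerivAt f (f' x) x) (hf' : Continuous f') (ht : t ∈ Icc a b) :
    ‖f t - f a‖ ≤ √((b - a) * ∫ x in a..b, ‖f' x‖ ^ 2) :=
  calc ‖f t - f a‖ = ‖∫ x in a..t, f' x‖ := by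
        rw [integral_eq_sub_of_hasDerivAt (fun x _ => hf x) (hf'.intervalIntegrable a t)]
    _ ≤ ∫ x in a..t, ‖f' x‖ := norm_integral_le_integral_norm ht.1
    _ ≤ ∫ x in a..b, ‖f' x‖ := integral_mono_interval le_rfl ht.1 ht.2
          (Filter.Eventually.of_forall fun _ => norm_nonneg _) (hf'.norm.intervalIntegrable a b)
    _ ≤ √((b - a) * ∫ x in a..b, ‖f' x‖ ^ 2) := (le_abs_self _).trans
          (Real.abs_le_sqrt (sq_integral_le_mul_integral_sq (ht.1.trans ht.2) hf'.norm))

section Approximation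

variable {E : Type*} [NormedAddCommGroup E] [NormedSpace ℝ E]

theorem norm_iteratedDeriv_le_iSup {u : ℝ → E} {n j : ℕ} {a b t : ℝ} (hu : ContDiff ℝ n u)
    (hj : j ≤ n) (ht : t ∈ Icc a b) :
    ‖iteratedDeriv j u t‖ ≤ ⨆ s : Icc a b, ⨆ i : Fin (n + 1), ‖iteratedDeriv i u s‖ := by
  have hsum : ContinuousOn (fun s => ∑ i : Fin (n + 1), ‖iteratedDeriv i u s‖) (Icc a b) :=
    (continuous_finsetSum _ fun (i : Fin (n + 1)) _ =>
      (hu.continuous_iteratedDeriv i (by exact_mod_cast i.is_le)).norm).continuousOn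
  obtain ⟨B, hB⟩ := isCompact_Icc.exists_bound_of_continuousOn hsum
  have hbdd : BddAbove (range fun s : Icc a b => ⨆ i : Fin (n + 1), ‖iteratedDeriv i u s‖) := by
    refine ⟨B, forall_mem_range.mpr fun s => ciSup_le fun i => ?_⟩
    exact (Finset.single_le_sum (f := fun i : Fin (n + 1) => ‖iteratedDeriv i u s‖)
      (fun i _ => norm_nonneg _) (Finset.mem_univ i)).trans
        ((Real.le_norm_self _).trans (hB s s.2))
  calc ‖iteratedDeriv j u t‖ ≤ ⨆ i : Fin (n + 1), ‖iteratedDeriv i u t‖ :=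
        le_ciSup (f := fun i : Fin (n + 1) => ‖iteratedDeriv i u t‖) (finite_range _).bddAbove
          ⟨j, Nat.lt_succ_of_le hj⟩
    _ ≤ _ := le_ciSup hbdd ⟨t, ht⟩

theorem exists_isPolyDeg_norm_sub_le {f : ℝ → E} {n : ℕ} {a b M : ℝ} (hab : a < b)
    (hf : ContDiff ℝ (n + 1) f) (hM : ∀ t ∈ Icc a b, ‖iteratedDeriv (n + 1) f t‖ ≤ M) :
    ∃ q, IsPolyDeg E n q ∧ ∀ t ∈ Icc a b, ‖f t - q t‖ ≤ M * (b - a) ^ (n + 1) := by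
  refine ⟨taylorWithinEval f n (Icc a b) a, isPolyDeg_taylorWithinEval f n _ a, fun t ht => ?_⟩
  have hM0 : 0 ≤ M := (norm_nonneg _).trans (hM a (left_mem_Icc.mpr hab.le))
  have hta : 0 ≤ t - a := sub_nonneg.mpr ht.1
  have hderiv : ∀ y ∈ Icc a b, ‖iteratedDerivWithin (n + 1) f (Icc a b) y‖ ≤ M := fun y hy => by
    rw [iteratedDerivWithin_eq_iteratedDeriv (uniqueDiffOn_Icc hab) hf.contDiffAt hy]
    exact hM y hy
  calc ‖f t - taylorWithinEval f n (Icc a b) a t‖ ≤ M * (t - a) ^ (n + 1) / n.factorial :=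
        taylor_mean_remainder_bound hab.le hf.contDiffOn ht hderiv
    _ ≤ M * (t - a) ^ (n + 1) :=
        div_le_self (by positivity) (by exact_mod_cast n.factorial_pos)
    _ ≤ M * (b - a) ^ (n + 1) := by gcongr; exact ht.2

theorem exists_isPolyDeg_norm_deriv_sub_le {u : ℝ → E} {k m : ℕ} {a b M : ℝ} (hm : m ≤ k)
    (hab : a < b) (hu : ContDiff ℝ (m + 1) u)
    (hM : ∀ t ∈ Icc a b, ‖iteratedDeriv (m + 1) u t‖ ≤ M) :
    ∃ q, IsPolyDeg E (k - 1) q ∧ ∀ t ∈ Icc a b, ‖deriv u t - q t‖ ≤ M * (b - a) ^ m := by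
  cases m with
  | zero => exact ⟨0, (polyDegSubmodule E _).zero_mem, fun t ht => by simpa using hM t ht⟩
  | succ n =>
    obtain ⟨q, hq, hq_le⟩ := exists_isPolyDeg_norm_sub_le hab (by exact_mod_cast hu.deriv')
      (by simpa only [iteratedDeriv_succ'] using hM)
    exact ⟨q, hq.mono (by omega), hq_le⟩

end Approximation

theorem IsRitzOn.integral_norm_sq_deriv_sub_le {X : Type*} [NormedAddCommGroup X]
    [InnerProductSpace ℂ X] {a b : ℝ} {k : ℕ} {u p q : ℝ → X} (hp : IsRitzOn X a b k u p)
    (hab : a ≤ b) (hu : Continuous (deriv u)) (hq : IsPolyDeg X (k - 1) q) :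
    ∫ t in a..b, ‖deriv u t - deriv p t‖ ^ 2 ≤ ∫ t in a..b, ‖deriv u t - q t‖ ^ 2 := by
  obtain ⟨hp_poly, -, horth⟩ := hp
  have hχ : IsPolyDeg X (k - 1) (fun t => q t - deriv p t) :=
    (polyDegSubmodule X _).sub_mem hq hp_poly.deriv
  refine integral_norm_sq_le_of_integral_inner_sub_eq_zero (𝕜 := ℂ) hab
    (hu.sub ((hp_poly.contDiff (N := 1)).continuous_deriv le_rfl))
    (hu.sub (hq.contDiff (N := 0)).continuous) ?_
  simpa only [sub_sub_sub_cancel_left] using horth _ hχ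

theorem IsRitzOn.norm_sub_le {X : Type*} [NormedAddCommGroup X] [InnerProductSpace ℂ X]
    [CompleteSpace X] {a b t : ℝ} {k : ℕ} {u p : ℝ → X} (hp : IsRitzOn X a b k u p)
    (hu : ContDiff ℝ 1 u) (ht : t ∈ Icc a b) :
    ‖u t - p t‖ ≤ √((b - a) * ∫ x in a..b, ‖deriv u x - deriv p x‖ ^ 2) := by
  have hp_smooth : ContDiff ℝ 1 p := hp.1.contDiff
  have h := norm_sub_le_sqrt_mul_integral_norm_sq (f := fun x => u x - p x)
    (fun x => ((hu.differentiable one_ne_zero x).hasDerivAt).sub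
      (hp_smooth.differentiable one_ne_zero x).hasDerivAt)
    ((hu.continuous_deriv le_rfl).sub (hp_smooth.continuous_deriv le_rfl)) ht
  rwa [hp.2.1, sub_self, sub_zero] at h

theorem ritz_L2_in_time_approximation_general (k m : ℕ) (hm : m ≤ k) :
    -- C depends only on k and m (not on τ, u, X)
    ∃ C : ℝ, 0 < C ∧
      -- X : a complex Hilbert space
      ∀ (X : Type u) [NormedAddCommGroup X] [InnerProductSpace ℂ X] [CompleteSpace X],
      ∀ (a τ : ℝ), 0 < τ →
      ∀ u : ℝ → X, ContDiff ℝ (m + 1) u →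
      ∀ p : ℝ → X, IsRitzOn X a (a + τ) k u p →
        Real.sqrt (∫ t in a..(a + τ), ‖u t - p t‖ ^ 2)
          ≤ C * τ ^ ((m : ℝ) + 3 / 2) *
            -- the W^{m+1,∞}(I;X) norm: max_{0 ≤ j ≤ m+1} sup_{t ∈ I} ‖u^{(j)}(t)‖
            (⨆ t : Set.Icc a (a + τ), ⨆ j : Fin (m + 2), ‖iteratedDeriv (j : ℕ) u (t : ℝ)‖) := by
  refine ⟨1, one_pos, fun X _ _ _ a τ hτ u hu p hp => ?_⟩
  set M := ⨆ t : Set.Icc a (a + τ), ⨆ j : Fin (m + 2), ‖iteratedDeriv (j : ℕ) u (t : ℝ)‖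
  have hab : a < a + τ := lt_add_of_pos_right a hτ
  have hM : ∀ j ≤ m + 1, ∀ t ∈ Icc a (a + τ), ‖iteratedDeriv j u t‖ ≤ M :=
    fun j hj t ht => norm_iteratedDeriv_le_iSup (n := m + 1) (by exact_mod_cast hu) hj ht
  have hM0 : 0 ≤ M := (norm_nonneg _).trans (hM 0 (Nat.zero_le _) a (left_mem_Icc.mpr hab.le))
  obtain ⟨q, hq, hq_le⟩ := exists_isPolyDeg_norm_deriv_sub_le hm hab hu (hM (m + 1) le_rfl)
  set ε := M * τ ^ m
  have hderiv : ∫ t in a..a + τ, ‖deriv u t - deriv p t‖ ^ 2 ≤ τ * ε ^ 2 :=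
    (hp.integral_norm_sq_deriv_sub_le hab.le (hu.continuous_deriv le_add_self) hq).trans
      (by simpa using integral_norm_sq_le_of_norm_le hab.le hq_le)
  have hpointwise : ∀ t ∈ Icc a (a + τ), ‖u t - p t‖ ≤ τ * ε := fun t ht =>
    calc ‖u t - p t‖ ≤ √(τ * (τ * ε ^ 2)) := (hp.norm_sub_le (hu.of_le le_add_self) ht).trans
          (Real.sqrt_le_sqrt (by simpa using mul_le_mul_of_nonneg_left hderiv hτ.le))
      _ = τ * ε := by rw [← mul_assoc, ← sq, ← mul_pow, Real.sqrt_sq (by positivity)]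
  have hL2 : ∫ t in a..a + τ, ‖u t - p t‖ ^ 2 ≤ τ * (τ * ε) ^ 2 := by
    simpa using integral_norm_sq_le_of_norm_le hab.le hpointwise
  calc √(∫ t in a..a + τ, ‖u t - p t‖ ^ 2) ≤ √(τ * (τ * ε) ^ 2) := Real.sqrt_le_sqrt hL2
    _ = 1 * τ ^ ((m : ℝ) + 3 / 2) * M := by
      rw [Real.sqrt_mul hτ.le, Real.sqrt_sq (by positivity), Real.rpow_add hτ, Real.rpow_natCast,
        show (3 / 2 : ℝ) = 1 + 1 / 2 by norm_num, Real.rpow_add hτ, Real.rpow_one,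
        ← Real.sqrt_eq_rpow]
      ring

theorem ritz_L2_in_time_approximation (k m : ℕ) (hk : 1 ≤ k) (hm : m ≤ k) :
    -- C depends only on k and m (not on τ, u, X)
    ∃ C : ℝ, 0 < C ∧
      -- X : a complex Hilbert space
      ∀ (X : Type u) [NormedAddCommGroup X] [InnerProductSpace ℂ X] [CompleteSpace X],
      ∀ (a τ : ℝ), 0 < τ →
      ∀ u : ℝ → X, ContDiff ℝ (m + 1) u →
      ∀ p : ℝ → X, IsRitzOn X a (a + τ) k u p →
        Real.sqrt (∫ t in a..(a + τ), ‖u t - p t‖ ^ 2)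
          ≤ C * τ ^ ((m : ℝ) + 3 / 2) *
            -- the W^{m+1,∞}(I;X) norm: max_{0 ≤ j ≤ m+1} sup_{t ∈ I} ‖u^{(j)}(t)‖
            (⨆ t : Set.Icc a (a + τ), ⨆ j : Fin (m + 2), ‖iteratedDeriv (j : ℕ) u (t : ℝ)‖) :=
  ritz_L2_in_time_approximation_general k m hm
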